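/- Assume U : [0,α] → ℝ is convex and continuously differentiable on [0,α] with derivative U′, that m¹ : [0,α] → [0,∞) is continuous, nondecreasing with m¹(0) = 0, and that m² : [0,α] → [0,∞) is continuous, nonincreasing with m²(α) = 0. Then: (i) for every ρ⁰ ∈ [0,α]^N and every sequence (ρⁿ)_{n≥0} in [0,α]^N with H(ρ^{n+1}) = ρⁿ for all n ≥ 0, the limit ρ^∞ = lim_{n→∞} ρⁿ exists in ℝ^N and is a fixed point: H(ρ^∞) = ρ^∞; (ii) if (ηⁿ)_{n≥0} is another such sequence, starting from η⁰ ∈ [0,α]^N and with limit η^∞, then Σ_{i=1}^N |ρ^∞_i − η^∞_i| ≤ Σ_{i=1}^N |ρ⁰_i − η⁰_i| (the time-limit operator is an ℓ¹-contraction). -/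

import Mathlib

/-
The scheme is monotone: the upwind flux `F_{k+1/2}` is nondecreasing in `ρ_k` and nonincreasing
in `ρ_{k+1}`, so pairing `H(ρ) - H(η)` with `sign(ρ - η)` and summing by parts gives
`‖ρ - η‖₁ ≤ ‖H(ρ) - H(η)‖₁`. Along two orbits the `ℓ¹` distance is therefore nonincreasing,
which is (ii) once the limits exist.

For (i), convexity of `U` gives the energy inequality `E[ρ] + Δt D[ρ] ≤ E[H(ρ)]` with a
nonnegative dissipation `D = Σ (ξ_k - ξ_{k+1}) F_{k+1/2}`. Since `E` is bounded below on the
compact set `[0,α]^N`, `D[ρⁿ] → 0`, so a cluster point `p` of the orbit has `D[p] = 0`: all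
fluxes vanish at `p` and `H(p) = p`. The `ℓ¹` distance from `ρⁿ` to the fixed point `p` is
nonincreasing and tends to `0` along a subsequence, hence `ρⁿ → p`.
-/

open Set Finset

/-- Velocity v_{k+1/2} at the interface between cells k and k+1 (0-based). -/
noncomputable def vel (N : ℕ) (Δx : ℝ) (V : Fin N → ℝ) (U' : ℝ → ℝ)
    (ρ : Fin N → ℝ) (k : ℕ) : ℝ :=
  if h : k + 1 < N then
    -(((U' (ρ ⟨k + 1, h⟩) + V ⟨k + 1, h⟩) -
        (U' (ρ ⟨k, Nat.lt_of_succ_lt h⟩) + V ⟨k, Nat.lt_of_succ_lt h⟩)) / Δx)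
  else 0

/-- Upwind numerical flux F_{k+1/2} at the interface between cells k and k+1
(0-based), with the no-flux convention at the boundary. -/
noncomputable def numFlux (N : ℕ) (Δx : ℝ) (V : Fin N → ℝ) (m1 m2 U' : ℝ → ℝ)
    (ρ : Fin N → ℝ) (k : ℕ) : ℝ :=
  if h : k + 1 < N then
    m1 (ρ ⟨k, Nat.lt_of_succ_lt h⟩) * m2 (ρ ⟨k + 1, h⟩) *
        max (vel N Δx V U' ρ k) 0 +
      m1 (ρ ⟨k + 1, h⟩) * m2 (ρ ⟨k, Nat.lt_of_succ_lt h⟩) *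
        min (vel N Δx V U' ρ k) 0
  else 0

/-- One implicit Euler step map H_i(λ, ρ) = ρ_i + λ(Δt/Δx)(F_{i+1/2} − F_{i−1/2}). -/
noncomputable def Hmap (N : ℕ) (Δx Δt : ℝ) (V : Fin N → ℝ) (m1 m2 U' : ℝ → ℝ)
    (lam : ℝ) (ρ : Fin N → ℝ) (i : Fin N) : ℝ :=
  ρ i + lam * (Δt / Δx) *
    (numFlux N Δx V m1 m2 U' ρ i -
      if (i : ℕ) = 0 then 0 else numFlux N Δx V m1 m2 U' ρ ((i : ℕ) - 1))

open Filter Topology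

namespace ConvexOn

variable {S : Set ℝ} {f : ℝ → ℝ}

theorem add_mul_sub_le_of_hasDerivWithinAt (hf : ConvexOn ℝ S f) {x y f' : ℝ} (hx : x ∈ S)
    (hy : y ∈ S) (hfx : HasDerivWithinAt f f' S x) : f x + f' * (y - x) ≤ f y := by
  rcases lt_trichotomy x y with hxy | rfl | hxy
  · have h := hf.le_slope_of_hasDerivWithinAt hx hy hxy hfx
    rw [slope_def_field, le_div_iff₀ (sub_pos.2 hxy)] at h
    linarith
  · simp
  · have h := hf.slope_le_of_hasDerivWithinAt hy hx hxy hfx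
    rw [slope_def_field, div_le_iff₀ (sub_pos.2 hxy)] at h
    linarith

theorem monotoneOn_of_hasDerivWithinAt {f' : ℝ → ℝ} (hf : ConvexOn ℝ S f)
    (hf' : ∀ x ∈ S, HasDerivWithinAt f (f' x) S x) : MonotoneOn f' S := by
  intro x hx y hy hxy
  rcases hxy.eq_or_lt with rfl | hxy
  · rfl
  · exact (hf.le_slope_of_hasDerivWithinAt hx hy hxy (hf' x hx)).trans
      (hf.slope_le_of_hasDerivWithinAt hx hy hxy (hf' y hy))

end ConvexOn

theorem sign_mul_le_abs (x y : ℝ) : (SignType.sign x : ℝ) * y ≤ |y| := by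
  rcases lt_trichotomy x 0 with hx | rfl | hx
  · simp [sign_neg hx, neg_le_abs]
  · simp
  · simp [sign_pos hx, le_abs_self]

theorem sum_abs_le_sum_abs_add {ι : Type*} (s : Finset ι) (u w : ι → ℝ)
    (h : 0 ≤ ∑ i ∈ s, (SignType.sign (u i) : ℝ) * w i) :
    ∑ i ∈ s, |u i| ≤ ∑ i ∈ s, |u i + w i| :=
  calc ∑ i ∈ s, |u i| = ∑ i ∈ s, (SignType.sign (u i) : ℝ) * u i := by simp only [sign_mul_self]
    _ ≤ ∑ i ∈ s, (SignType.sign (u i) : ℝ) * (u i + w i) := by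
      simp only [mul_add, sum_add_distrib]; linarith
    _ ≤ ∑ i ∈ s, |u i + w i| := sum_le_sum fun i _ => sign_mul_le_abs _ _

theorem sign_sub_sub_mul_sub_nonneg {s : Set ℝ} {Φ : ℝ → ℝ → ℝ}
    (hΦ : ∀ ⦃x x' y y'⦄, x ∈ s → x' ∈ s → y ∈ s → y' ∈ s → x ≤ x' → y' ≤ y → Φ x y ≤ Φ x' y')
    {x x' y y' : ℝ} (hx : x ∈ s) (hx' : x' ∈ s) (hy : y ∈ s) (hy' : y' ∈ s) :
    0 ≤ ((SignType.sign (x - x') : ℝ) - SignType.sign (y - y')) * (Φ x y - Φ x' y') := by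
  have h₁ := hΦ hx hx' hy hy'
  have h₂ := hΦ hx' hx hy' hy
  rcases lt_trichotomy x x' with hxx | hxx | hxx <;>
    rcases lt_trichotomy y y' with hyy | hyy | hyy <;>
    simp [sign_neg, sign_pos, hxx, hyy, hxx.le, hyy.le] at h₁ h₂ ⊢ <;> linarith

theorem sum_mul_sub_shift_eq (N : ℕ) (S F : ℕ → ℝ) (hF : F (N - 1) = 0) :
    ∑ i : Fin N, S i * (F i - if (i : ℕ) = 0 then 0 else F (i - 1)) =
      ∑ k ∈ range (N - 1), (S k - S (k + 1)) * F k := by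
  rw [Fin.sum_univ_eq_sum_range (fun i => S i * (F i - if i = 0 then 0 else F (i - 1)))]
  cases N with
  | zero => simp
  | succ M =>
    rw [Nat.add_sub_cancel] at hF ⊢
    suffices ∀ M, ∑ i ∈ range (M + 1), S i * (F i - if i = 0 then 0 else F (i - 1)) =
        ∑ k ∈ range M, (S k - S (k + 1)) * F k + S M * F M by
      rw [this, hF, mul_zero, add_zero]
    intro M
    induction M with
    | zero => simp
    | succ M ih =>
      rw [sum_range_succ, ih, sum_range_succ, if_neg M.succ_ne_zero, Nat.add_sub_cancel]
      ring

theorem tendsto_zero_of_add_mul_le {e d : ℕ → ℝ} {c : ℝ} (hc : 0 < c) (hd : ∀ n, 0 ≤ d n)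
    (he : BddBelow (range e)) (hed : ∀ n, e (n + 1) + c * d (n + 1) ≤ e n) :
    Tendsto d atTop (𝓝 0) := by
  have he_anti : Antitone e := antitone_nat_of_succ_le fun n => by
    linarith [hed n, mul_nonneg hc.le (hd (n + 1))]
  have hlim := tendsto_atTop_ciInf he_anti he
  have hdiff : Tendsto (fun n => (e n - e (n + 1)) / c) atTop (𝓝 0) := by
    simpa using ((hlim.sub (hlim.comp (tendsto_add_atTop_nat 1))).div_const c)
  refine (tendsto_add_atTop_iff_nat 1).1 (squeeze_zero (fun n => hd (n + 1)) (fun n => ?_) hdiff)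
  rw [le_div_iff₀ hc]
  linarith [hed n]

theorem tendsto_sum_abs_sub {ι : Type*} [Fintype ι] {f g : ℕ → ι → ℝ} {a b : ι → ℝ}
    (hf : Tendsto f atTop (𝓝 a)) (hg : Tendsto g atTop (𝓝 b)) :
    Tendsto (fun n => ∑ i, |f n i - g n i|) atTop (𝓝 (∑ i, |a i - b i|)) :=
  tendsto_finsetSum _ fun i _ => ((tendsto_pi_nhds.1 hf i).sub (tendsto_pi_nhds.1 hg i)).abs

theorem tendsto_of_antitone_sum_abs_sub {ι : Type*} [Fintype ι] {ρ : ℕ → ι → ℝ} {p : ι → ℝ}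
    {φ : ℕ → ℕ} (hanti : Antitone fun n => ∑ i, |ρ n i - p i|) (hφ : StrictMono φ)
    (hρφ : Tendsto (ρ ∘ φ) atTop (𝓝 p)) : Tendsto ρ atTop (𝓝 p) := by
  have hlim : Tendsto (fun n => ∑ i, |ρ n i - p i|) atTop (𝓝 0) := by
    refine (tendsto_iff_tendsto_subseq_of_antitone hanti hφ.tendsto_atTop).2 ?_
    simpa [Function.comp_def] using tendsto_sum_abs_sub hρφ (tendsto_const_nhds (x := p))
  refine tendsto_pi_nhds.2 fun i => tendsto_iff_norm_sub_tendsto_zero.2 <|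
    squeeze_zero (fun _ => norm_nonneg _) (fun n => ?_) hlim
  rw [Real.norm_eq_abs]
  exact single_le_sum (f := fun j => |ρ n j - p j|) (fun j _ => abs_nonneg _) (Finset.mem_univ i)

def upwindFlux (m1 m2 : ℝ → ℝ) (x y v : ℝ) : ℝ :=
  m1 x * m2 y * max v 0 + m1 y * m2 x * min v 0

section upwindFlux

variable {s : Set ℝ} {m1 m2 : ℝ → ℝ}

theorem upwindFlux_zero (x y : ℝ) : upwindFlux m1 m2 x y 0 = 0 := by
  simp [upwindFlux]

theorem upwindFlux_mono (hm1 : MonotoneOn m1 s) (hm1_nonneg : ∀ x ∈ s, 0 ≤ m1 x)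
    (hm2 : AntitoneOn m2 s) (hm2_nonneg : ∀ x ∈ s, 0 ≤ m2 x) {x x' y y' v v' : ℝ}
    (hx : x ∈ s) (hx' : x' ∈ s) (hy : y ∈ s) (hy' : y' ∈ s)
    (hxx : x ≤ x') (hyy : y' ≤ y) (hvv : v ≤ v') :
    upwindFlux m1 m2 x y v ≤ upwindFlux m1 m2 x' y' v' := by
  have hmax : m1 x * m2 y * max v 0 ≤ m1 x' * m2 y' * max v' 0 :=
    mul_le_mul
      (mul_le_mul (hm1 hx hx' hxx) (hm2 hy' hy hyy) (hm2_nonneg y hy) (hm1_nonneg x' hx'))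
      (max_le_max hvv le_rfl) (le_max_right _ _)
      (mul_nonneg (hm1_nonneg x' hx') (hm2_nonneg y' hy'))
  have hmin : m1 y * m2 x * min v 0 ≤ m1 y' * m2 x' * min v' 0 :=
    calc m1 y * m2 x * min v 0 ≤ m1 y * m2 x * min v' 0 := by
          gcongr
          exact mul_nonneg (hm1_nonneg y hy) (hm2_nonneg x hx)
      _ ≤ m1 y' * m2 x' * min v' 0 :=
          mul_le_mul_of_nonpos_right
            (mul_le_mul (hm1 hy' hy hyy) (hm2 hx hx' hxx) (hm2_nonneg x' hx') (hm1_nonneg y hy))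
            (min_le_right _ _)
  exact add_le_add hmax hmin

theorem mul_upwindFlux_div_nonneg {Δx : ℝ} (hΔx : 0 ≤ Δx) {x y : ℝ}
    (hx : 0 ≤ m1 x * m2 y) (hy : 0 ≤ m1 y * m2 x) (d : ℝ) :
    0 ≤ d * upwindFlux m1 m2 x y (d / Δx) := by
  rcases le_total 0 d with hd | hd
  · have hv : 0 ≤ d / Δx := div_nonneg hd hΔx
    simp only [upwindFlux, max_eq_left hv, min_eq_right hv, mul_zero, add_zero]
    positivity
  · have hv : d / Δx ≤ 0 := div_nonpos_of_nonpos_of_nonneg hd hΔx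
    simp only [upwindFlux, max_eq_right hv, min_eq_left hv, mul_zero, zero_add]
    exact mul_nonneg_of_nonpos_of_nonpos hd (mul_nonpos_of_nonneg_of_nonpos hy hv)

theorem upwindFlux_div_eq_zero_of_mul_eq_zero {Δx x y d : ℝ}
    (h : d * upwindFlux m1 m2 x y (d / Δx) = 0) : upwindFlux m1 m2 x y (d / Δx) = 0 := by
  rcases mul_eq_zero.1 h with rfl | h
  · rw [zero_div, upwindFlux_zero]
  · exact h

end upwindFlux

def admissibleSet (N : ℕ) (α : ℝ) : Set (Fin N → ℝ) :=
  univ.pi fun _ => Icc 0 α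

theorem mem_admissibleSet {N : ℕ} {α : ℝ} {ρ : Fin N → ℝ} :
    ρ ∈ admissibleSet N α ↔ ∀ i, ρ i ∈ Icc 0 α :=
  mem_univ_pi

theorem isCompact_admissibleSet (N : ℕ) (α : ℝ) : IsCompact (admissibleSet N α) :=
  isCompact_univ_pi fun _ => isCompact_Icc

def chemPotential (N : ℕ) (V : Fin N → ℝ) (U' : ℝ → ℝ) (ρ : Fin N → ℝ) (k : ℕ) : ℝ :=
  if h : k < N then U' (ρ ⟨k, h⟩) + V ⟨k, h⟩ else 0

-- Since `ξ_k - ξ_{k+1} = Δx v_{k+1/2}`, this is the dissipation `Δx Σ F_{k+1/2} v_{k+1/2}`.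
noncomputable def dissipation (N : ℕ) (Δx : ℝ) (V : Fin N → ℝ) (m1 m2 U' : ℝ → ℝ)
    (ρ : Fin N → ℝ) : ℝ :=
  ∑ k ∈ range (N - 1),
    (chemPotential N V U' ρ k - chemPotential N V U' ρ (k + 1)) * numFlux N Δx V m1 m2 U' ρ k

def freeEnergy (N : ℕ) (Δx : ℝ) (V : Fin N → ℝ) (U : ℝ → ℝ) (ρ : Fin N → ℝ) : ℝ :=
  Δx * ∑ i, (U (ρ i) + V i * ρ i)

section scheme

variable {N : ℕ} {Δx Δt α : ℝ} {V : Fin N → ℝ} {U U' m1 m2 : ℝ → ℝ} {ρ : Fin N → ℝ}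

theorem chemPotential_of_lt {k : ℕ} (h : k < N) :
    chemPotential N V U' ρ k = U' (ρ ⟨k, h⟩) + V ⟨k, h⟩ :=
  dif_pos h

theorem chemPotential_val (i : Fin N) : chemPotential N V U' ρ i = U' (ρ i) + V i :=
  chemPotential_of_lt i.isLt

theorem numFlux_of_lt {k : ℕ} (h : k + 1 < N) :
    numFlux N Δx V m1 m2 U' ρ k =
      upwindFlux m1 m2 (ρ ⟨k, k.lt_of_succ_lt h⟩) (ρ ⟨k + 1, h⟩)
        ((chemPotential N V U' ρ k - chemPotential N V U' ρ (k + 1)) / Δx) := by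
  rw [numFlux, dif_pos h, vel, dif_pos h, upwindFlux, chemPotential_of_lt (k.lt_of_succ_lt h),
    chemPotential_of_lt h, ← neg_div, neg_sub]

theorem numFlux_of_not_lt {k : ℕ} (h : ¬k + 1 < N) : numFlux N Δx V m1 m2 U' ρ k = 0 :=
  dif_neg h

theorem sum_mul_Hmap_sub_self (S : ℕ → ℝ) :
    ∑ i : Fin N, S i * (Hmap N Δx Δt V m1 m2 U' 1 ρ i - ρ i) =
      Δt / Δx * ∑ k ∈ range (N - 1), (S k - S (k + 1)) * numFlux N Δx V m1 m2 U' ρ k := by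
  rw [← sum_mul_sub_shift_eq N S _ (numFlux_of_not_lt (by omega)), mul_sum]
  refine sum_congr rfl fun i _ => ?_
  rw [Hmap]
  ring

theorem chemPotential_sub_mul_numFlux_nonneg (hΔx : 0 ≤ Δx)
    (hm1_nonneg : ∀ s ∈ Icc 0 α, 0 ≤ m1 s) (hm2_nonneg : ∀ s ∈ Icc 0 α, 0 ≤ m2 s)
    (hρ : ρ ∈ admissibleSet N α) (k : ℕ) :
    0 ≤ (chemPotential N V U' ρ k - chemPotential N V U' ρ (k + 1)) *
      numFlux N Δx V m1 m2 U' ρ k := by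
  by_cases hk : k + 1 < N
  · rw [numFlux_of_lt hk]
    rw [mem_admissibleSet] at hρ
    exact mul_upwindFlux_div_nonneg hΔx
      (mul_nonneg (hm1_nonneg _ (hρ _)) (hm2_nonneg _ (hρ _)))
      (mul_nonneg (hm1_nonneg _ (hρ _)) (hm2_nonneg _ (hρ _))) _
  · rw [numFlux_of_not_lt hk, mul_zero]

theorem dissipation_nonneg (hΔx : 0 ≤ Δx)
    (hm1_nonneg : ∀ s ∈ Icc 0 α, 0 ≤ m1 s) (hm2_nonneg : ∀ s ∈ Icc 0 α, 0 ≤ m2 s)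
    (hρ : ρ ∈ admissibleSet N α) : 0 ≤ dissipation N Δx V m1 m2 U' ρ :=
  sum_nonneg fun k _ => chemPotential_sub_mul_numFlux_nonneg hΔx hm1_nonneg hm2_nonneg hρ k

theorem Hmap_eq_self_of_dissipation_eq_zero (hΔx : 0 ≤ Δx)
    (hm1_nonneg : ∀ s ∈ Icc 0 α, 0 ≤ m1 s) (hm2_nonneg : ∀ s ∈ Icc 0 α, 0 ≤ m2 s)
    (hρ : ρ ∈ admissibleSet N α) (hD : dissipation N Δx V m1 m2 U' ρ = 0) :
    Hmap N Δx Δt V m1 m2 U' 1 ρ = ρ := by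
  have hflux : ∀ k, numFlux N Δx V m1 m2 U' ρ k = 0 := by
    intro k
    by_cases hk : k + 1 < N
    · have hterm := (sum_eq_zero_iff_of_nonneg fun k _ =>
        chemPotential_sub_mul_numFlux_nonneg hΔx hm1_nonneg hm2_nonneg hρ k).1 hD k
          (mem_range.2 (by omega))
      rw [numFlux_of_lt hk] at hterm ⊢
      exact upwindFlux_div_eq_zero_of_mul_eq_zero hterm
    · exact numFlux_of_not_lt hk
  funext i
  simp [Hmap, hflux]

theorem freeEnergy_add_mul_dissipation_le (hΔx : 0 < Δx) (hU : ConvexOn ℝ (Icc 0 α) U)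
    (hU' : ∀ s ∈ Icc 0 α, HasDerivWithinAt U (U' s) (Icc 0 α) s)
    (hρ : ρ ∈ admissibleSet N α) (hHρ : Hmap N Δx Δt V m1 m2 U' 1 ρ ∈ admissibleSet N α) :
    freeEnergy N Δx V U ρ + Δt * dissipation N Δx V m1 m2 U' ρ ≤
      freeEnergy N Δx V U (Hmap N Δx Δt V m1 m2 U' 1 ρ) := by
  set σ := Hmap N Δx Δt V m1 m2 U' 1 ρ
  rw [mem_admissibleSet] at hρ hHρ
  have htangent : ∀ i, U (ρ i) + V i * ρ i + chemPotential N V U' ρ i * (σ i - ρ i) ≤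
      U (σ i) + V i * σ i := by
    intro i
    have h := hU.add_mul_sub_le_of_hasDerivWithinAt (hρ i) (hHρ i) (hU' _ (hρ i))
    rw [chemPotential_val]
    linarith
  have hsum := sum_le_sum fun i (_ : i ∈ Finset.univ) => htangent i
  rw [sum_add_distrib, sum_mul_Hmap_sub_self] at hsum
  calc freeEnergy N Δx V U ρ + Δt * dissipation N Δx V m1 m2 U' ρ
      = Δx * (∑ i, (U (ρ i) + V i * ρ i) + Δt / Δx * dissipation N Δx V m1 m2 U' ρ) := by
        rw [freeEnergy]; field_simp
    _ ≤ freeEnergy N Δx V U σ := mul_le_mul_of_nonneg_left hsum hΔx.le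

theorem sum_abs_sub_le_sum_abs_Hmap_sub (hΔx : 0 ≤ Δx) (hΔt : 0 ≤ Δt)
    (hU' : MonotoneOn U' (Icc 0 α))
    (hm1 : MonotoneOn m1 (Icc 0 α)) (hm1_nonneg : ∀ s ∈ Icc 0 α, 0 ≤ m1 s)
    (hm2 : AntitoneOn m2 (Icc 0 α)) (hm2_nonneg : ∀ s ∈ Icc 0 α, 0 ≤ m2 s)
    {a b : Fin N → ℝ} (ha : a ∈ admissibleSet N α) (hb : b ∈ admissibleSet N α) :
    ∑ i, |a i - b i| ≤
      ∑ i, |Hmap N Δx Δt V m1 m2 U' 1 a i - Hmap N Δx Δt V m1 m2 U' 1 b i| := by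
  rw [mem_admissibleSet] at ha hb
  set S : ℕ → ℝ := fun k => if h : k < N then SignType.sign (a ⟨k, h⟩ - b ⟨k, h⟩) else 0
  have hpair : ∀ k ∈ range (N - 1),
      0 ≤ (S k - S (k + 1)) * (numFlux N Δx V m1 m2 U' a k - numFlux N Δx V m1 m2 U' b k) := by
    intro k hk
    have hk1 : k + 1 < N := by rw [Finset.mem_range] at hk; omega
    have hk0 : k < N := k.lt_of_succ_lt hk1
    simp only [S, dif_pos hk0, dif_pos hk1, numFlux_of_lt hk1, chemPotential_of_lt hk0,
      chemPotential_of_lt hk1]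
    refine sign_sub_sub_mul_sub_nonneg (s := Icc 0 α)
      (Φ := fun x y => upwindFlux m1 m2 x y ((U' x + V ⟨k, hk0⟩ - (U' y + V ⟨k + 1, hk1⟩)) / Δx))
      (fun x x' y y' hx hx' hy hy' hxx hyy => upwindFlux_mono hm1 hm1_nonneg hm2 hm2_nonneg
        hx hx' hy hy' hxx hyy (div_le_div_of_nonneg_right ?_ hΔx)) (ha _) (hb _) (ha _) (hb _)
    linarith [hU' hx hx' hxx, hU' hy' hy hyy]
  set w : Fin N → ℝ := fun i =>
    (Hmap N Δx Δt V m1 m2 U' 1 a i - a i) - (Hmap N Δx Δt V m1 m2 U' 1 b i - b i)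
  have hw : 0 ≤ ∑ i, (SignType.sign (a i - b i) : ℝ) * w i := by
    have hS : ∀ i : Fin N, S i = SignType.sign (a i - b i) := fun i => dif_pos i.isLt
    have hsplit : ∑ i, (SignType.sign (a i - b i) : ℝ) * w i =
        ∑ i : Fin N, S i * (Hmap N Δx Δt V m1 m2 U' 1 a i - a i) -
          ∑ i : Fin N, S i * (Hmap N Δx Δt V m1 m2 U' 1 b i - b i) := by
      rw [← sum_sub_distrib]
      exact sum_congr rfl fun i _ => by rw [hS, mul_sub]
    rw [hsplit, sum_mul_Hmap_sub_self, sum_mul_Hmap_sub_self, ← mul_sub, ← sum_sub_distrib]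
    simp_rw [← mul_sub]
    exact mul_nonneg (div_nonneg hΔt hΔx) (sum_nonneg hpair)
  convert sum_abs_le_sum_abs_add Finset.univ (fun i => a i - b i) w hw using 3
  ring

theorem ContinuousOn.comp_apply_admissibleSet {g : ℝ → ℝ} (hg : ContinuousOn g (Icc 0 α))
    (i : Fin N) : ContinuousOn (fun ρ : Fin N → ℝ => g (ρ i)) (admissibleSet N α) :=
  hg.comp (continuous_apply i).continuousOn fun _ hρ => mem_admissibleSet.1 hρ i

theorem continuousOn_freeEnergy (hU : ContinuousOn U (Icc 0 α)) :
    ContinuousOn (freeEnergy N Δx V U) (admissibleSet N α) :=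
  continuousOn_const.mul <| continuousOn_finsetSum _ fun i _ =>
    (hU.comp_apply_admissibleSet i).add (continuousOn_const.mul (continuous_apply i).continuousOn)

theorem continuousOn_dissipation (hU' : ContinuousOn U' (Icc 0 α))
    (hm1 : ContinuousOn m1 (Icc 0 α)) (hm2 : ContinuousOn m2 (Icc 0 α)) :
    ContinuousOn (dissipation N Δx V m1 m2 U') (admissibleSet N α) := by
  have hξ : ∀ k, ContinuousOn (fun ρ => chemPotential N V U' ρ k) (admissibleSet N α) := by
    intro k
    unfold chemPotential
    split_ifs
    · exact (hU'.comp_apply_admissibleSet _).add continuousOn_const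
    · exact continuousOn_const
  have hF : ∀ k, ContinuousOn (fun ρ => numFlux N Δx V m1 m2 U' ρ k) (admissibleSet N α) := by
    intro k
    by_cases hk : k + 1 < N
    · simp only [numFlux_of_lt hk, upwindFlux]
      have hv : ContinuousOn
          (fun ρ => (chemPotential N V U' ρ k - chemPotential N V U' ρ (k + 1)) / Δx)
          (admissibleSet N α) :=
        ((hξ k).sub (hξ (k + 1))).div_const Δx
      exact (((hm1.comp_apply_admissibleSet _).mul (hm2.comp_apply_admissibleSet _)).mul
        (hv.sup continuousOn_const)).add
        (((hm1.comp_apply_admissibleSet _).mul (hm2.comp_apply_admissibleSet _)).mul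
          (hv.inf continuousOn_const))
    · simp only [numFlux_of_not_lt hk]
      exact continuousOn_const
  exact continuousOn_finsetSum _ fun k _ => ((hξ k).sub (hξ (k + 1))).mul (hF k)

theorem tendsto_dissipation_of_orbit (hΔx : 0 < Δx) (hΔt : 0 < Δt)
    (hU : ConvexOn ℝ (Icc 0 α) U) (hU' : ∀ s ∈ Icc 0 α, HasDerivWithinAt U (U' s) (Icc 0 α) s)
    (hm1_nonneg : ∀ s ∈ Icc 0 α, 0 ≤ m1 s) (hm2_nonneg : ∀ s ∈ Icc 0 α, 0 ≤ m2 s)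
    {ρ : ℕ → Fin N → ℝ} (hρ : ∀ n, ρ n ∈ admissibleSet N α)
    (hH : ∀ n, Hmap N Δx Δt V m1 m2 U' 1 (ρ (n + 1)) = ρ n) :
    Tendsto (fun n => dissipation N Δx V m1 m2 U' (ρ n)) atTop (𝓝 0) := by
  have hUc : ContinuousOn U (Icc 0 α) := fun s hs => (hU' s hs).continuousWithinAt
  obtain ⟨B, hB⟩ := (isCompact_admissibleSet N α).bddBelow_image
    (continuousOn_freeEnergy (Δx := Δx) (V := V) hUc)
  refine tendsto_zero_of_add_mul_le (e := fun n => freeEnergy N Δx V U (ρ n)) hΔt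
    (fun n => dissipation_nonneg hΔx.le hm1_nonneg hm2_nonneg (hρ n))
    ⟨B, ?_⟩ fun n => ?_
  · rintro _ ⟨n, rfl⟩
    exact hB ⟨ρ n, hρ n, rfl⟩
  · have h := freeEnergy_add_mul_dissipation_le (V := V) (m1 := m1) (m2 := m2) (Δt := Δt) hΔx hU
      hU' (hρ (n + 1)) (by rw [hH n]; exact hρ n)
    rwa [hH n] at h

theorem antitone_sum_abs_sub_of_orbit (hΔx : 0 ≤ Δx) (hΔt : 0 ≤ Δt)
    (hU' : MonotoneOn U' (Icc 0 α))
    (hm1 : MonotoneOn m1 (Icc 0 α)) (hm1_nonneg : ∀ s ∈ Icc 0 α, 0 ≤ m1 s)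
    (hm2 : AntitoneOn m2 (Icc 0 α)) (hm2_nonneg : ∀ s ∈ Icc 0 α, 0 ≤ m2 s)
    {ρ η : ℕ → Fin N → ℝ} (hρ : ∀ n, ρ n ∈ admissibleSet N α)
    (hρH : ∀ n, Hmap N Δx Δt V m1 m2 U' 1 (ρ (n + 1)) = ρ n)
    (hη : ∀ n, η n ∈ admissibleSet N α)
    (hηH : ∀ n, Hmap N Δx Δt V m1 m2 U' 1 (η (n + 1)) = η n) :
    Antitone fun n => ∑ i, |ρ n i - η n i| :=
  antitone_nat_of_succ_le fun n => by
    simpa only [hρH n, hηH n] using sum_abs_sub_le_sum_abs_Hmap_sub (V := V) hΔx hΔt hU' hm1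
      hm1_nonneg hm2 hm2_nonneg (hρ (n + 1)) (hη (n + 1))

end scheme

theorem scheme_time_limit_operator_general
    (N : ℕ) (hN : 2 ≤ N) (Δx Δt : ℝ) (hΔx : Δx = 1 / N) (hΔt : 0 < Δt)
    (α : ℝ) (V : Fin N → ℝ)
    (U U' : ℝ → ℝ) (hU_conv : ConvexOn ℝ (Icc 0 α) U)
    (hU_deriv : ∀ s ∈ Icc 0 α, HasDerivWithinAt U (U' s) (Icc 0 α) s)
    (hU'_cont : ContinuousOn U' (Icc 0 α))
    (m1 m2 : ℝ → ℝ)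
    (hm1_cont : ContinuousOn m1 (Icc 0 α)) (hm1_mono : MonotoneOn m1 (Icc 0 α))
    (hm1_nonneg : ∀ s ∈ Icc 0 α, 0 ≤ m1 s)
    (hm2_cont : ContinuousOn m2 (Icc 0 α)) (hm2_anti : AntitoneOn m2 (Icc 0 α))
    (hm2_nonneg : ∀ s ∈ Icc 0 α, 0 ≤ m2 s) :
    (∀ ρ : ℕ → Fin N → ℝ,
      (∀ n i, ρ n i ∈ Icc 0 α) →
      (∀ n, Hmap N Δx Δt V m1 m2 U' 1 (ρ (n + 1)) = ρ n) →
      ∃ ρlim : Fin N → ℝ,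
        Filter.Tendsto ρ Filter.atTop (nhds ρlim) ∧
        Hmap N Δx Δt V m1 m2 U' 1 ρlim = ρlim) ∧
    (∀ ρ η : ℕ → Fin N → ℝ, ∀ ρlim ηlim : Fin N → ℝ,
      (∀ n i, ρ n i ∈ Icc 0 α) →
      (∀ n, Hmap N Δx Δt V m1 m2 U' 1 (ρ (n + 1)) = ρ n) →
      (∀ n i, η n i ∈ Icc 0 α) →
      (∀ n, Hmap N Δx Δt V m1 m2 U' 1 (η (n + 1)) = η n) →
      Filter.Tendsto ρ Filter.atTop (nhds ρlim) →
      Filter.Tendsto η Filter.atTop (nhds ηlim) →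
      ∑ i, |ρlim i - ηlim i| ≤ ∑ i, |ρ 0 i - η 0 i|) := by
  have hΔx₀ : 0 < Δx := by
    rw [hΔx]
    exact one_div_pos.2 (by exact_mod_cast (by omega : 0 < N))
  have hU'_mono := hU_conv.monotoneOn_of_hasDerivWithinAt hU_deriv
  have hcontr := @antitone_sum_abs_sub_of_orbit N Δx Δt α V U' m1 m2 hΔx₀.le hΔt.le hU'_mono
    hm1_mono hm1_nonneg hm2_anti hm2_nonneg
  refine ⟨fun ρ hρ hρH => ?_, fun ρ η ρlim ηlim hρ hρH hη hηH hρlim hηlim => ?_⟩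
  · replace hρ := fun n => mem_admissibleSet.2 (hρ n)
    obtain ⟨p, hp, φ, hφ, hρφ⟩ := (isCompact_admissibleSet N α).tendsto_subseq hρ
    have hDp : dissipation N Δx V m1 m2 U' p = 0 := by
      have hcont : ContinuousWithinAt (dissipation N Δx V m1 m2 U') (admissibleSet N α) p :=
        continuousOn_dissipation hU'_cont hm1_cont hm2_cont p hp
      have hsub : Tendsto (ρ ∘ φ) atTop (𝓝[admissibleSet N α] p) :=
        tendsto_nhdsWithin_iff.2 ⟨hρφ, .of_forall fun n => hρ (φ n)⟩
      exact tendsto_nhds_unique (hcont.tendsto.comp hsub) <| (tendsto_dissipation_of_orbit hΔx₀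
        hΔt hU_conv hU_deriv hm1_nonneg hm2_nonneg hρ hρH).comp hφ.tendsto_atTop
    have hfix :=
      Hmap_eq_self_of_dissipation_eq_zero (Δt := Δt) hΔx₀.le hm1_nonneg hm2_nonneg hp hDp
    exact ⟨p, tendsto_of_antitone_sum_abs_sub
      (hcontr hρ hρH (fun _ => hp) fun _ => hfix) hφ hρφ, hfix⟩
  · exact le_of_tendsto' (tendsto_sum_abs_sub hρlim hηlim) fun n =>
      hcontr (fun n => mem_admissibleSet.2 (hρ n)) hρH (fun n => mem_admissibleSet.2 (hη n)) hηH
        (Nat.zero_le n)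

/-- Every implicit-scheme orbit in [0,α]^N converges to a fixed point of the scheme,
and the resulting time-limit operator is an ℓ¹-contraction. -/
theorem scheme_time_limit_operator
    (N : ℕ) (hN : 2 ≤ N) (Δx Δt : ℝ) (hΔx : Δx = 1 / N) (hΔt : 0 < Δt)
    (α : ℝ) (hα : 0 < α) (V : Fin N → ℝ)
    (U U' : ℝ → ℝ) (hU_conv : ConvexOn ℝ (Icc 0 α) U)
    (hU_deriv : ∀ s ∈ Icc 0 α, HasDerivWithinAt U (U' s) (Icc 0 α) s)
    (hU'_cont : ContinuousOn U' (Icc 0 α))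
    (m1 m2 : ℝ → ℝ)
    (hm1_cont : ContinuousOn m1 (Icc 0 α)) (hm1_mono : MonotoneOn m1 (Icc 0 α))
    (hm1_nonneg : ∀ s ∈ Icc 0 α, 0 ≤ m1 s) (hm10 : m1 0 = 0)
    (hm2_cont : ContinuousOn m2 (Icc 0 α)) (hm2_anti : AntitoneOn m2 (Icc 0 α))
    (hm2_nonneg : ∀ s ∈ Icc 0 α, 0 ≤ m2 s) (hm2α : m2 α = 0) :
    (∀ ρ : ℕ → Fin N → ℝ,
      (∀ n i, ρ n i ∈ Icc 0 α) →
      (∀ n, Hmap N Δx Δt V m1 m2 U' 1 (ρ (n + 1)) = ρ n) →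
      ∃ ρlim : Fin N → ℝ,
        Filter.Tendsto ρ Filter.atTop (nhds ρlim) ∧
        Hmap N Δx Δt V m1 m2 U' 1 ρlim = ρlim) ∧
    (∀ ρ η : ℕ → Fin N → ℝ, ∀ ρlim ηlim : Fin N → ℝ,
      (∀ n i, ρ n i ∈ Icc 0 α) →
      (∀ n, Hmap N Δx Δt V m1 m2 U' 1 (ρ (n + 1)) = ρ n) →
      (∀ n i, η n i ∈ Icc 0 α) →
      (∀ n, Hmap N Δx Δt V m1 m2 U' 1 (η (n + 1)) = η n) →
      Filter.Tendsto ρ Filter.atTop (nhds ρlim) →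
      Filter.Tendsto η Filter.atTop (nhds ηlim) →
      ∑ i, |ρlim i - ηlim i| ≤ ∑ i, |ρ 0 i - η 0 i|) :=
  scheme_time_limit_operator_general N hN Δx Δt hΔx hΔt α V U U' hU_conv hU_deriv hU'_cont m1 m2
    hm1_cont hm1_mono hm1_nonneg hm2_cont hm2_anti hm2_nonneg
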